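/- arXiv:2208.05024 — 4 statements merged into one kernel-verified Lean document; each statement's English description precedes it below -/
import Mathlib

section
/- Let K be a field of characteristic zero and ∂ : K → K a derivation. If a ∈ K satisfies ∂(a) = λ·a for some integer λ, then (σ ∘ exp(z∂))(a) = t^λ · a, where σ : K[[z]] → K[[t−1]] is the isomorphism sending z to log(t) = ∑_{i≥1}(-1)^{i+1}(t−1)^i/i. (For λ ≥ 0 this lies in K[t]; for λ < 0 it is a·(1/t^{-λ}) in the fraction field K(t).) -/
/-- The exponential map `exp(z∂) : f ↦ ∑ ∂^i(f) zⁱ/i!`. -/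
noncomputable def expS {K : Type*} [Field K] (d : K → K) (f : K) : PowerSeries K :=
  PowerSeries.mk fun i => (i.factorial : K)⁻¹ * (d^[i] f)

/-- The logarithm series `log(1+u) = ∑_{i≥1} (-1)^{i+1} uⁱ/i`. -/
noncomputable def logS (K : Type*) [Field K] : PowerSeries K :=
  PowerSeries.mk fun i => if i = 0 then 0 else (-1 : K) ^ (i + 1) * (i : K)⁻¹

/-- Formal substitution `f(g(z))` of a power series `g` with zero constant term into `f`. -/
noncomputable def comp {K : Type*} [Field K] (f g : PowerSeries K) : PowerSeries K :=
  PowerSeries.mk fun n => ∑ i ∈ Finset.range (n + 1),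
    PowerSeries.coeff (R := K) i f * PowerSeries.coeff (R := K) n (g ^ i)

/-- `t^λ` for `λ ∈ ℤ`, where `t = 1 + (t-1)` is the invertible element `1 + X` of
`K[[t-1]]`. -/
noncomputable def tzpow (K : Type*) [Field K] (n : ℤ) : PowerSeries K :=
  if 0 ≤ n then (1 + PowerSeries.X) ^ n.toNat
  else ((1 + PowerSeries.X : PowerSeries K) ^ (-n).toNat)⁻¹

open PowerSeries Finset

section Aux

variable {K : Type*} [Field K] [CharZero K]

omit [CharZero K] in
lemma aux_coeff_pow_eq_zero {g : PowerSeries K} (hg : PowerSeries.constantCoeff (R := K) g = 0)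
    {n i : ℕ} (h : n < i) : PowerSeries.coeff (R := K) n (g ^ i) = 0 := by
  have hX : (PowerSeries.X : PowerSeries K) ∣ g := PowerSeries.X_dvd_iff.mpr hg
  exact (PowerSeries.X_pow_dvd_iff.mp (pow_dvd_pow_of_dvd hX i)) n h

omit [CharZero K] in
lemma aux_coeff_one_add_X_mul_deriv (f : PowerSeries K) (n : ℕ) :
    PowerSeries.coeff (R := K) n ((1 + PowerSeries.X) * PowerSeries.derivative K f)
      = (n + 1 : K) * PowerSeries.coeff (R := K) (n + 1) f + (n : K) * PowerSeries.coeff (R := K) n f := by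
  rw [add_mul, one_mul, map_add]
  cases n with
  | zero => simp [PowerSeries.coeff_derivative]
  | succ m =>
      rw [PowerSeries.coeff_succ_X_mul, PowerSeries.coeff_derivative, PowerSeries.coeff_derivative]
      push_cast; ring

lemma aux_one_add_X_mul_deriv_logS :
    (1 + PowerSeries.X) * PowerSeries.derivative K (logS K) = 1 := by
  ext n
  rw [add_mul, one_mul, map_add]
  cases n with
  | zero => simp [PowerSeries.coeff_derivative, logS]
  | succ m =>
      rw [PowerSeries.coeff_succ_X_mul, PowerSeries.coeff_derivative, PowerSeries.coeff_derivative]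
      simp only [logS, PowerSeries.coeff_mk, Nat.succ_ne_zero, if_false, PowerSeries.coeff_one]
      have h1 : ((m:K) + 1) ≠ 0 := Nat.cast_add_one_ne_zero m
      have h2 : ((m:K) + 1 + 1) ≠ 0 := by
        have e : (m:K) + 1 + 1 = ((m+2 : ℕ) : K) := by push_cast; ring
        rw [e]; exact Nat.cast_ne_zero.mpr (by omega)
      push_cast
      field_simp
      ring

omit [CharZero K] in
lemma aux_constantCoeff_logS : PowerSeries.constantCoeff (R := K) (logS K) = 0 := by
  simp [logS, ← PowerSeries.coeff_zero_eq_constantCoeff]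

lemma aux_log_rec (n i : ℕ) :
    (n + 1 : K) * PowerSeries.coeff (R := K) (n + 1) (logS K ^ (i + 1))
      + (n : K) * PowerSeries.coeff (R := K) n (logS K ^ (i + 1))
      = (i + 1 : K) * PowerSeries.coeff (R := K) n (logS K ^ i) := by
  have h := aux_coeff_one_add_X_mul_deriv (K := K) (logS K ^ (i + 1)) n
  rw [← h, Derivation.leibniz_pow, Nat.add_sub_cancel]
  have e : (1 + PowerSeries.X) * ((i + 1) • logS K ^ i • PowerSeries.derivative K (logS K))
      = (i + 1 : ℕ) • (logS K ^ i * ((1 + PowerSeries.X) * PowerSeries.derivative K (logS K))) := by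
    rw [smul_eq_mul, nsmul_eq_mul, nsmul_eq_mul]; ring
  rw [e, aux_one_add_X_mul_deriv_logS, mul_one, map_nsmul, nsmul_eq_mul]
  push_cast; ring

omit [CharZero K] in
lemma aux_cc_pow (m : ℕ) :
    PowerSeries.constantCoeff (R := K) ((1 + PowerSeries.X) ^ m) = 1 := by
  rw [map_pow]; simp

omit [CharZero K] in
lemma aux_cc_tzpow (l : ℤ) : PowerSeries.constantCoeff (R := K) (tzpow K l) = 1 := by
  unfold tzpow
  split
  · exact aux_cc_pow _
  · rw [PowerSeries.constantCoeff_inv, aux_cc_pow, inv_one]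

omit [CharZero K] in
lemma aux_deriv_pow (m : ℕ) :
    (1 + PowerSeries.X) * PowerSeries.derivative K ((1 + PowerSeries.X) ^ m)
      = PowerSeries.C (R := K) (m : K) * (1 + PowerSeries.X) ^ m := by
  have hD : PowerSeries.derivative K (1 + PowerSeries.X) = 1 := by
    rw [map_add, PowerSeries.derivative_X, Derivation.map_one_eq_zero, zero_add]
  rw [Derivation.leibniz_pow, hD, smul_eq_mul, mul_one]
  cases m with
  | zero => simp
  | succ k =>
      rw [Nat.add_sub_cancel, nsmul_eq_mul]
      have : ((k + 1 : ℕ) : PowerSeries K) = PowerSeries.C (R := K) ((k + 1 : ℕ) : K) := by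
        rw [map_natCast]
      rw [this]
      push_cast
      ring

omit [CharZero K] in
lemma aux_deriv_tzpow (l : ℤ) :
    (1 + PowerSeries.X) * PowerSeries.derivative K (tzpow K l)
      = PowerSeries.C (R := K) (l : K) * tzpow K l := by
  unfold tzpow
  split
  · next hl =>
      rw [aux_deriv_pow]
      congr 2
      rw [← Int.toNat_of_nonneg hl]
      push_cast
      rfl
  · next hl =>
      set m := (-l).toNat with hm
      set u := (1 + PowerSeries.X : PowerSeries K) ^ m with hu
      have hcc : PowerSeries.constantCoeff (R := K) u ≠ 0 := by
        rw [hu, aux_cc_pow]; exact one_ne_zero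
      have e2 : u * u⁻¹ = 1 := PowerSeries.mul_inv_cancel _ hcc
      have e1 : (1 + PowerSeries.X) * PowerSeries.derivative K u
          = PowerSeries.C (R := K) (m : K) * u := aux_deriv_pow m
      have e3 : u * PowerSeries.derivative K u⁻¹ + u⁻¹ * PowerSeries.derivative K u = 0 := by
        have := congrArg (PowerSeries.derivative K) e2
        rwa [Derivation.leibniz, Derivation.map_one_eq_zero, smul_eq_mul, smul_eq_mul] at this
      have hlm : PowerSeries.C (R := K) (l : K) = - PowerSeries.C (R := K) (m : K) := by
        rw [← map_neg]
        congr 1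
        have h1 : (m : ℤ) = -l := Int.toNat_of_nonneg (by omega)
        have h2 : (m : K) = ((m : ℤ) : K) := by push_cast; ring
        rw [h2, h1]; push_cast; ring
      rw [hlm]
      linear_combination (-(u⁻¹ * u⁻¹)) * e1
        + (-((1 + PowerSeries.X) * PowerSeries.derivative K u⁻¹)
            - PowerSeries.C (R := K) (m : K) * u⁻¹) * e2
        + ((1 + PowerSeries.X) * u⁻¹) * e3

lemma aux_tz_rec (l : ℤ) (n : ℕ) :
    (n + 1 : K) * PowerSeries.coeff (R := K) (n + 1) (tzpow K l)
      = ((l : K) - n) * PowerSeries.coeff (R := K) n (tzpow K l) := by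
  have h := congrArg (PowerSeries.coeff (R := K) n) (aux_deriv_tzpow (K := K) l)
  rw [aux_coeff_one_add_X_mul_deriv, PowerSeries.coeff_C_mul] at h
  linear_combination h

lemma aux_iterate (d : Derivation ℚ K K) (a : K) (l : ℤ) (h : d a = (l : K) * a) (i : ℕ) :
    d^[i] a = (l : K) ^ i * a := by
  induction i with
  | zero => simp
  | succ i ih =>
      rw [Function.iterate_succ_apply', ih]
      have e : (l : K) ^ i * a = ((l : ℚ) ^ i) • a := by
        rw [Rat.smul_def]; push_cast; ring
      rw [e, d.map_smul, h, Rat.smul_def]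
      push_cast; ring

lemma aux_coeff_expS (d : Derivation ℚ K K) (a : K) (l : ℤ) (h : d a = (l : K) * a) (i : ℕ) :
    PowerSeries.coeff (R := K) i (expS (⇑d) a) = (i.factorial : K)⁻¹ * ((l : K) ^ i * a) := by
  rw [expS, PowerSeries.coeff_mk, aux_iterate d a l h]

lemma aux_E_succ (d : Derivation ℚ K K) (a : K) (l : ℤ) (h : d a = (l : K) * a) (i : ℕ) :
    PowerSeries.coeff (R := K) (i + 1) (expS (⇑d) a) * (i + 1 : K)
      = (l : K) * PowerSeries.coeff (R := K) i (expS (⇑d) a) := by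
  rw [aux_coeff_expS d a l h, aux_coeff_expS d a l h, Nat.factorial_succ]
  have h2 : ((i.factorial : K)) ≠ 0 := Nat.cast_ne_zero.mpr i.factorial_ne_zero
  have h3 : ((i : K) + 1) ≠ 0 := Nat.cast_add_one_ne_zero i
  push_cast
  field_simp
  ring

lemma aux_comp_rec (d : Derivation ℚ K K) (a : K) (l : ℤ) (h : d a = (l : K) * a) (n : ℕ) :
    (n + 1 : K) * PowerSeries.coeff (R := K) (n + 1) (comp (expS (⇑d) a) (logS K))
      = ((l : K) - n) * PowerSeries.coeff (R := K) n (comp (expS (⇑d) a) (logS K)) := by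
  set E : ℕ → K := fun i => PowerSeries.coeff (R := K) i (expS (⇑d) a) with hE
  set L : ℕ → ℕ → K := fun m i => PowerSeries.coeff (R := K) m (logS K ^ i) with hL
  have hcomp : ∀ m, PowerSeries.coeff (R := K) m (comp (expS (⇑d) a) (logS K))
      = ∑ i ∈ range (m + 1), E i * L m i := fun m => by
    rw [comp, PowerSeries.coeff_mk]
  rw [hcomp, hcomp, Finset.mul_sum,
    Finset.sum_range_succ' (fun i => (n + 1 : K) * (E i * L (n + 1) i)) (n + 1)]
  have hL0 : L (n + 1) 0 = 0 := by simp [hL, PowerSeries.coeff_one]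
  have key : ∀ i, (n + 1 : K) * (E (i + 1) * L (n + 1) (i + 1))
      = (l : K) * (E i * L n i) - (n : K) * (E (i + 1) * L n (i + 1)) := by
    intro i
    have hr := aux_log_rec (K := K) n i
    have hs := aux_E_succ d a l h i
    have hr' : (n + 1 : K) * L (n + 1) (i + 1)
        = (i + 1 : K) * L n i - (n : K) * L n (i + 1) := by
      rw [← hr]; ring
    calc (n + 1 : K) * (E (i + 1) * L (n + 1) (i + 1))
        = E (i + 1) * ((n + 1 : K) * L (n + 1) (i + 1)) := by ring
      _ = E (i + 1) * ((i + 1 : K) * L n i - (n : K) * L n (i + 1)) := by rw [hr']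
      _ = (E (i + 1) * (i + 1 : K)) * L n i - (n : K) * (E (i + 1) * L n (i + 1)) := by
          ring
      _ = ((l : K) * E i) * L n i - (n : K) * (E (i + 1) * L n (i + 1)) := by rw [← hs]
      _ = (l : K) * (E i * L n i) - (n : K) * (E (i + 1) * L n (i + 1)) := by ring
  rw [Finset.sum_congr rfl (fun i _ => key i), Finset.sum_sub_distrib, ← Finset.mul_sum,
    ← Finset.mul_sum]
  have hshift : ∑ i ∈ range (n + 1), E (i + 1) * L n (i + 1)
      = (∑ i ∈ range (n + 1), E i * L n i) - E 0 * L n 0 := by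
    have := Finset.sum_range_succ' (fun i => E i * L n i) (n + 1)
    have hvan : E (n + 1) * L n (n + 1) = 0 := by
      rw [hL]
      simp only
      rw [aux_coeff_pow_eq_zero aux_constantCoeff_logS (Nat.lt_succ_self n), mul_zero]
    rw [Finset.sum_range_succ, hvan, add_zero] at this
    linear_combination -this
  have hn0 : (n : K) * L n 0 = 0 := by
    cases n <;> simp [hL, PowerSeries.coeff_one]
  rw [hshift, hL0]
  linear_combination E 0 * hn0

end Aux

/-- If `∂ a = λ a` with `λ ∈ ℤ`, then `(σ ∘ exp(z∂))(a) = t^λ · a` in `K[[t-1]]`,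
where `σ` substitutes the logarithm series for `z`. -/
theorem stmt_3 {K : Type*} [Field K] [CharZero K] (d : Derivation ℚ K K) (a : K) (l : ℤ)
    (h : d a = (l : K) * a) :
    comp (expS (⇑d) a) (logS K) = tzpow K l * PowerSeries.C (R := K) a := by
  apply PowerSeries.ext
  intro n
  induction n with
  | zero =>
      rw [comp, PowerSeries.coeff_mk, Finset.sum_range_one, pow_zero,
        PowerSeries.coeff_mul_C, aux_coeff_expS d a l h]
      have := aux_cc_tzpow (K := K) l
      rw [← PowerSeries.coeff_zero_eq_constantCoeff_apply] at this
      rw [this]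
      simp
  | succ n ih =>
      have h1 := aux_comp_rec d a l h n
      have h2 := aux_tz_rec (K := K) l n
      have h3 : (n + 1 : K) * PowerSeries.coeff (R := K) (n + 1) (tzpow K l * PowerSeries.C (R := K) a)
          = ((l : K) - n) * PowerSeries.coeff (R := K) n (tzpow K l * PowerSeries.C (R := K) a) := by
        rw [PowerSeries.coeff_mul_C, PowerSeries.coeff_mul_C]
        linear_combination a * h2
      have hne : ((n : K) + 1) ≠ 0 := Nat.cast_add_one_ne_zero n
      apply mul_left_cancel₀ hne
      rw [h1, h3, ih]
end

section
/- Let K be a field of characteristic zero and ∂ : K → K a derivation such that K is generated as a field by a set {a_i}_{i∈I} of elements satisfying ∂(a_i) = λ_i a_i with λ_i ∈ ℤ for all i (a 'rational semisimple' derivation). Then for every f ∈ K, the element (σ ∘ exp(z∂))(f) ∈ K[[t−1]] is a rational function, i.e. lies in the image of the subring K(t) ∩ K[[t−1]] of power series that are expansions at t = 1 of elements of K(t). -/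
set_option linter.unusedSectionVars false

section Aux
open PowerSeries Finset

variable {K : Type*} [Field K] [CharZero K] (d : Derivation ℚ K K)

theorem coeff_derivFun (f : PowerSeries K) (n : ℕ) :
    PowerSeries.coeff n f.derivativeFun = PowerSeries.coeff (n + 1) f * (n + 1) :=
  PowerSeries.coeff_derivative f n


theorem coeff_pow_zero {g : PowerSeries K} (hg : constantCoeff g = 0)
    {n i : ℕ} (h : n < i) : PowerSeries.coeff n (g ^ i) = 0 := by
  obtain ⟨h', rfl⟩ := X_dvd_iff.mpr hg
  rw [mul_pow, coeff_X_pow_mul', if_neg (by omega)]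

theorem coeff_comp (F g : PowerSeries K) (n : ℕ) :
    PowerSeries.coeff n (comp F g) = ∑ i ∈ Finset.range (n + 1),
      PowerSeries.coeff i F * PowerSeries.coeff n (g ^ i) := by
  simp [comp]

theorem coeff_comp_eq {g : PowerSeries K} (hg : constantCoeff g = 0)
    (F : PowerSeries K) {n N : ℕ} (h : n < N) :
    PowerSeries.coeff n (comp F g) =
      PowerSeries.coeff n (∑ i ∈ Finset.range N, PowerSeries.C (PowerSeries.coeff i F) * g ^ i) := by
  rw [coeff_comp]
  rw [map_sum (PowerSeries.coeff n)]
  simp only [coeff_C_mul]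
  apply Finset.sum_subset (Finset.range_subset_range.mpr h)
  intro i _ hi
  rw [coeff_pow_zero hg (by simpa using hi), mul_zero]

theorem comp_one {g : PowerSeries K} : comp 1 g = 1 := by
  ext n
  rw [coeff_comp,
    Finset.sum_eq_single 0 (fun i _ hi => by simp [PowerSeries.coeff_one, hi]) (by simp)]
  simp [PowerSeries.coeff_one]

theorem comp_add (F₁ F₂ g : PowerSeries K) : comp (F₁ + F₂) g = comp F₁ g + comp F₂ g := by
  ext n
  simp [coeff_comp, add_mul, Finset.sum_add_distrib]

theorem comp_C_mul (c : K) (F g : PowerSeries K) :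
    comp (PowerSeries.C c * F) g = PowerSeries.C c * comp F g := by
  ext n
  simp [coeff_comp, coeff_C_mul, Finset.mul_sum, mul_assoc]

theorem bridge (n : ℕ) (h : ℕ × ℕ → K) (hv : ∀ p : ℕ × ℕ, n < p.1 + p.2 → h p = 0) :
    ∑ i ∈ Finset.range (n+1), ∑ p ∈ Finset.HasAntidiagonal.antidiagonal i, h p
      = ∑ p ∈ Finset.range (n+1) ×ˢ Finset.range (n+1), h p := by
  rw [← Finset.sum_biUnion]
  · apply Finset.sum_subset
    · intro p hp
      simp only [Finset.mem_biUnion, Finset.mem_range, Finset.HasAntidiagonal.mem_antidiagonal] at hp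
      obtain ⟨i, hi, rfl⟩ := hp
      simp only [Finset.mem_product, Finset.mem_range]
      omega
    · intro p hp hnp
      apply hv
      by_contra hle
      exact hnp (Finset.mem_biUnion.mpr ⟨p.1 + p.2, Finset.mem_range.mpr (by omega),
        Finset.HasAntidiagonal.mem_antidiagonal.mpr rfl⟩)
  · intro i _ j _ hij
    exact Finset.disjoint_left.mpr fun p hpi hpj => hij (by
      rw [Finset.HasAntidiagonal.mem_antidiagonal] at hpi hpj; omega)

theorem comp_mul {g : PowerSeries K} (hg : constantCoeff g = 0) (F₁ F₂ : PowerSeries K) :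
    comp (F₁ * F₂) g = comp F₁ g * comp F₂ g := by
  ext n
  -- RHS: replace comp by partial sums
  have hR : PowerSeries.coeff n (comp F₁ g * comp F₂ g) =
      PowerSeries.coeff n
        ((∑ i ∈ Finset.range (n+1), PowerSeries.C (PowerSeries.coeff i F₁) * g ^ i) *
         (∑ i ∈ Finset.range (n+1), PowerSeries.C (PowerSeries.coeff i F₂) * g ^ i)) := by
    rw [PowerSeries.coeff_mul, PowerSeries.coeff_mul]
    apply Finset.sum_congr rfl
    intro p hp
    rw [Finset.HasAntidiagonal.mem_antidiagonal] at hp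
    rw [coeff_comp_eq hg F₁ (show p.1 < n+1 by omega),
        coeff_comp_eq hg F₂ (show p.2 < n+1 by omega)]
  rw [hR, Finset.sum_mul_sum, map_sum (PowerSeries.coeff n), coeff_comp]
  simp only [PowerSeries.coeff_mul, Finset.sum_mul]
  have hinner : ∀ x : ℕ, (PowerSeries.coeff n)
      (∑ j ∈ Finset.range (n + 1),
        PowerSeries.C (PowerSeries.coeff x F₁) * g ^ x *
          (PowerSeries.C (PowerSeries.coeff j F₂) * g ^ j)) =
      ∑ j ∈ Finset.range (n + 1), PowerSeries.coeff x F₁ * PowerSeries.coeff j F₂ *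
        PowerSeries.coeff n (g ^ (x + j)) := by
    intro x
    rw [map_sum (PowerSeries.coeff n)]
    apply Finset.sum_congr rfl
    intro j _
    rw [mul_mul_mul_comm, ← map_mul, ← pow_add, coeff_C_mul]
  simp only [hinner]
  have key := bridge n (fun p : ℕ × ℕ => PowerSeries.coeff p.1 F₁ * PowerSeries.coeff p.2 F₂ *
      PowerSeries.coeff n (g ^ (p.1 + p.2)))
    (fun p hp => by
      show PowerSeries.coeff p.1 F₁ * PowerSeries.coeff p.2 F₂ *
        PowerSeries.coeff n (g ^ (p.1 + p.2)) = 0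
      rw [coeff_pow_zero hg hp, mul_zero])
  have hL : ∑ x ∈ Finset.range (n + 1), ∑ p ∈ Finset.HasAntidiagonal.antidiagonal x,
      PowerSeries.coeff p.1 F₁ * PowerSeries.coeff p.2 F₂ * PowerSeries.coeff n (g ^ x) =
      ∑ x ∈ Finset.range (n + 1), ∑ p ∈ Finset.HasAntidiagonal.antidiagonal x,
      PowerSeries.coeff p.1 F₁ * PowerSeries.coeff p.2 F₂ *
        PowerSeries.coeff n (g ^ (p.1 + p.2)) := by
    apply Finset.sum_congr rfl
    intro x hx
    apply Finset.sum_congr rfl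
    intro p hp
    rw [Finset.HasAntidiagonal.mem_antidiagonal] at hp
    rw [hp]
  rw [hL, key, Finset.sum_product]


theorem coeff_expS (f : K) (n : ℕ) :
    PowerSeries.coeff n (expS (⇑d) f) = (n.factorial : K)⁻¹ * (d^[n] f) := by
  simp [expS]

theorem coeff_zero_expS (f : K) : PowerSeries.coeff 0 (expS (⇑d) f) = f := by
  simp [expS]

theorem expS_add (x y : K) : expS (⇑d) (x + y) = expS (⇑d) x + expS (⇑d) y := by
  ext n
  have : d^[n] (x + y) = d^[n] x + d^[n] y := by
    induction n generalizing x y with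
    | zero => rfl
    | succ n ih => simp [Function.iterate_succ_apply, map_add, ih]
  simp [coeff_expS, this, mul_add]

theorem expS_one : expS (⇑d) 1 = 1 := by
  ext n
  cases n with
  | zero => simp [coeff_expS, PowerSeries.coeff_one]
  | succ n =>
    have : d^[n+1] (1 : K) = 0 := by
      rw [Function.iterate_succ_apply, Derivation.map_one_eq_zero]
      exact Function.iterate_fixed (map_zero d) n
    simp [coeff_expS, this, PowerSeries.coeff_one]

theorem derivative_expS (f : K) :
    PowerSeries.derivativeFun (expS (⇑d) f) = expS (⇑d) (d f) := by
  ext n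
  rw [coeff_derivFun, coeff_expS, coeff_expS, Function.iterate_succ_apply]
  have h1 : ((n+1 : ℕ) : K) ≠ 0 := Nat.cast_ne_zero.mpr (Nat.succ_ne_zero n)
  have h2 : ((n.factorial : ℕ) : K) ≠ 0 := Nat.cast_ne_zero.mpr n.factorial_ne_zero
  rw [Nat.factorial_succ, Nat.cast_mul, mul_inv]
  have h1' : ((n:K)+1) ≠ 0 := by exact_mod_cast h1
  push_cast
  rw [show (((n:K)+1))⁻¹ * ((n.factorial : K))⁻¹ * ((⇑d)^[n] (d f)) * ((n:K)+1)
      = ((n.factorial : K))⁻¹ * ((⇑d)^[n] (d f)) * ((((n:K)+1))⁻¹ * (((n:K)+1))) from by ring,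
    inv_mul_cancel₀ h1', mul_one]

theorem constantCoeff_expS (f : K) : PowerSeries.constantCoeff (expS (⇑d) f) = f := by
  rw [← PowerSeries.coeff_zero_eq_constantCoeff_apply, coeff_zero_expS]

theorem coeff_expS_mul (n : ℕ) : ∀ x y : K,
    PowerSeries.coeff n (expS (⇑d) (x * y)) =
    PowerSeries.coeff n (expS (⇑d) x * expS (⇑d) y) := by
  induction n with
  | zero =>
    intro x y
    simp only [PowerSeries.coeff_zero_eq_constantCoeff, map_mul, constantCoeff_expS]
  | succ n ih =>
    intro x y
    have hc : ((n:K)+1) ≠ 0 := Nat.cast_add_one_ne_zero n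
    apply mul_left_cancel₀ hc
    have key : ∀ f : K, ((n:K)+1) * PowerSeries.coeff (n+1) (expS (⇑d) f)
        = PowerSeries.coeff n (expS (⇑d) (d f)) := by
      intro f
      rw [← derivative_expS, coeff_derivFun]
      ring
    have key2 : ((n:K)+1) * PowerSeries.coeff (n+1) (expS (⇑d) x * expS (⇑d) y)
        = PowerSeries.coeff n (PowerSeries.derivativeFun (expS (⇑d) x * expS (⇑d) y)) := by
      rw [coeff_derivFun]; ring
    rw [key, key2, PowerSeries.derivativeFun_mul, derivative_expS, derivative_expS,
      Derivation.leibniz, smul_eq_mul, smul_eq_mul, expS_add, map_add, map_add, ih, ih,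
      smul_eq_mul, smul_eq_mul]

theorem expS_mul (x y : K) :
    expS (⇑d) (x * y) = expS (⇑d) x * expS (⇑d) y := by
  ext n; exact coeff_expS_mul d n x y


theorem constantCoeff_logS : PowerSeries.constantCoeff (logS K) = 0 := by
  rw [← PowerSeries.coeff_zero_eq_constantCoeff_apply]
  simp [logS]

theorem derivative_logS_mul : PowerSeries.derivativeFun (logS K) * (1 + PowerSeries.X) = 1 := by
  have hc : ∀ n : ℕ, PowerSeries.coeff n (PowerSeries.derivativeFun (logS K)) = (-1 : K) ^ n := by
    intro n
    rw [coeff_derivFun]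
    simp only [logS, PowerSeries.coeff_mk, if_neg (Nat.succ_ne_zero n)]
    have h1 : ((n+1 : ℕ) : K) ≠ 0 := Nat.cast_ne_zero.mpr (Nat.succ_ne_zero n)
    rw [pow_succ, pow_succ]
    have h2 : ((1:K) + (n:K)) ≠ 0 := by
      intro h; apply h1; push_cast; linear_combination h
    field_simp
    have h3 : ((n:K) + 1) ≠ 0 := by intro h; apply h1; push_cast; linear_combination h
    push_cast; ring
  ext n
  rw [PowerSeries.coeff_one, mul_add, mul_one, map_add]
  cases n with
  | zero =>
    rw [if_pos rfl]
    have : PowerSeries.coeff 0 (PowerSeries.derivativeFun (logS K) * PowerSeries.X) = 0 := by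
      rw [PowerSeries.coeff_zero_eq_constantCoeff_apply, map_mul]
      simp
    rw [this, hc 0, pow_zero, add_zero]
  | succ n =>
    rw [if_neg (Nat.succ_ne_zero n), hc (n+1), PowerSeries.coeff_succ_mul_X, hc n]
    ring

theorem derivative_comp {g : PowerSeries K} (hg : constantCoeff g = 0) (F : PowerSeries K) :
    PowerSeries.derivativeFun (comp F g) =
      comp (PowerSeries.derivativeFun F) g * PowerSeries.derivativeFun g := by
  ext n
  rw [coeff_derivFun, coeff_comp_eq hg F (show n+1 < n+2 by omega),
    ← coeff_derivFun]
  have hR : PowerSeries.coeff n (comp (PowerSeries.derivativeFun F) g * PowerSeries.derivativeFun g) =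
      PowerSeries.coeff n
        ((∑ j ∈ Finset.range (n+1),
          PowerSeries.C (PowerSeries.coeff j (PowerSeries.derivativeFun F)) * g ^ j) *
          PowerSeries.derivativeFun g) := by
    rw [PowerSeries.coeff_mul, PowerSeries.coeff_mul]
    apply Finset.sum_congr rfl
    intro p hp
    rw [Finset.HasAntidiagonal.mem_antidiagonal] at hp
    rw [coeff_comp_eq hg _ (show p.1 < n+1 by omega)]
  rw [hR]
  congr 1
  have hD : ∀ h : PowerSeries K, PowerSeries.derivativeFun h = PowerSeries.derivative K h :=
    fun _ => rfl
  rw [hD, map_sum, Finset.sum_range_succ', Finset.sum_mul]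
  have h0 : (PowerSeries.derivative K) (PowerSeries.C (PowerSeries.coeff 0 F) * g ^ 0) = 0 := by
    rw [pow_zero, mul_one]; exact PowerSeries.derivative_C
  rw [h0, add_zero]
  apply Finset.sum_congr rfl
  intro i _
  rw [Derivation.leibniz, PowerSeries.derivative_C, smul_zero, add_zero,
    Derivation.leibniz_pow, Nat.add_sub_cancel, coeff_derivFun]
  simp only [smul_eq_mul, nsmul_eq_mul, map_mul, map_add, map_one, map_natCast, ← hD]
  push_cast
  ring


theorem deriv_opX_pow (m : ℕ) :
    PowerSeries.derivativeFun ((1 + PowerSeries.X : PowerSeries K) ^ m) * (1 + PowerSeries.X) =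
      PowerSeries.C (m : K) * (1 + PowerSeries.X) ^ m := by
  induction m with
  | zero => simp [PowerSeries.derivativeFun_one]
  | succ m ih =>
    have hdX : PowerSeries.derivativeFun (1 + PowerSeries.X : PowerSeries K) = 1 := by
      have : PowerSeries.derivativeFun (1 + PowerSeries.X : PowerSeries K) =
          PowerSeries.derivative K (1 + PowerSeries.X) := rfl
      rw [this, map_add, PowerSeries.derivative_X]
      have h1 : PowerSeries.derivative K (1 : PowerSeries K) = 0 := by
        rw [← map_one (PowerSeries.C (R := K)), PowerSeries.derivative_C]
      rw [h1, zero_add]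
    rw [pow_succ, PowerSeries.derivativeFun_mul, hdX]
    push_cast [map_add, map_one]
    rw [smul_eq_mul, smul_eq_mul]
    ring_nf
    linear_combination (1 + PowerSeries.X : PowerSeries K) * ih

theorem ODE_step (c : K) (F : PowerSeries K)
    (hF : (1 + PowerSeries.X) * PowerSeries.derivativeFun F = PowerSeries.C c * F) (n : ℕ) :
    PowerSeries.coeff (n+1) F * ((n : K) + 1) + PowerSeries.coeff n F * (n : K)
      = c * PowerSeries.coeff n F := by
  have h := congrArg (PowerSeries.coeff n) hF
  rw [add_mul, one_mul, map_add, coeff_derivFun, coeff_C_mul] at h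
  cases n with
  | zero =>
    have hz : PowerSeries.coeff 0 (PowerSeries.X * PowerSeries.derivativeFun F) = 0 := by
      rw [PowerSeries.coeff_zero_eq_constantCoeff_apply, map_mul]
      simp
    rw [hz] at h
    push_cast
    push_cast at h
    linear_combination h
  | succ m =>
    rw [PowerSeries.coeff_succ_X_mul, coeff_derivFun] at h
    push_cast
    push_cast at h
    linear_combination h

theorem ODE_unique (c : K) (F G : PowerSeries K)
    (hF : (1 + PowerSeries.X) * PowerSeries.derivativeFun F = PowerSeries.C c * F)
    (hG : (1 + PowerSeries.X) * PowerSeries.derivativeFun G = PowerSeries.C c * G)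
    (h0 : PowerSeries.coeff 0 F = PowerSeries.coeff 0 G) : F = G := by
  ext n
  induction n with
  | zero => exact h0
  | succ n ih =>
    have hc : ((n:K)+1) ≠ 0 := Nat.cast_add_one_ne_zero n
    apply mul_right_cancel₀ hc
    have h1 := ODE_step c F hF n
    have h2 := ODE_step c G hG n
    rw [ih] at h1
    linear_combination h1 - h2

theorem expS_rat_mul (q : ℚ) (x : K) :
    expS (⇑d) ((q : K) * x) = PowerSeries.C (q : K) * expS (⇑d) x := by
  ext n
  have h : (⇑d)^[n] ((q : K) * x) = (q : K) * (⇑d)^[n] x := by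
    induction n generalizing x with
    | zero => rfl
    | succ n ih =>
      rw [Function.iterate_succ_apply, Function.iterate_succ_apply]
      have : d ((q : K) * x) = (q : K) * d x := by
        rw [show (q : K) * x = q • x from (Rat.smul_def q x).symm, Derivation.map_smul, Rat.smul_def]
      rw [this, ih]
  rw [coeff_expS, coeff_C_mul, coeff_expS, h]
  ring

/-- `Φ f = (σ ∘ exp(z∂))(f)`. -/
noncomputable abbrev Phi (f : K) : PowerSeries K := comp (expS (⇑d) f) (logS K)

theorem Phi_one : Phi d (1 : K) = 1 := by rw [Phi, expS_one, comp_one]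

theorem Phi_mul (x y : K) : Phi d (x * y) = Phi d x * Phi d y := by
  rw [Phi, expS_mul, comp_mul constantCoeff_logS]

theorem Phi_zero : Phi d (0 : K) = 0 := by
  have h1 : expS (⇑d) (0 : K) = 0 := by
    ext n
    rw [coeff_expS]
    rw [Function.iterate_fixed (map_zero d) n]
    simp
  rw [Phi, h1]
  ext n
  rw [coeff_comp]
  simp

theorem Phi_add (x y : K) : Phi d (x + y) = Phi d x + Phi d y := by
  rw [Phi, expS_add, comp_add]

theorem Phi_neg (x : K) : Phi d (-x) = - Phi d x := by
  have h := Phi_add d x (-x)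
  rw [add_neg_cancel, Phi_zero] at h
  linear_combination -h

theorem coeff_zero_Phi (f : K) : PowerSeries.coeff 0 (Phi d f) = f := by
  rw [Phi, coeff_comp]
  simp [coeff_zero_expS]

theorem constantCoeff_Phi (f : K) : PowerSeries.constantCoeff (Phi d f) = f := by
  rw [← PowerSeries.coeff_zero_eq_constantCoeff_apply, coeff_zero_Phi]

theorem Phi_ODE (c : ℤ) (x : K) (hx : d x = (c : K) * x) :
    (1 + PowerSeries.X) * PowerSeries.derivativeFun (Phi d x)
      = PowerSeries.C (c : K) * Phi d x := by
  have h1 : PowerSeries.derivativeFun (Phi d x)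
      = comp (expS (⇑d) (d x)) (logS K) * PowerSeries.derivativeFun (logS K) := by
    rw [Phi, derivative_comp constantCoeff_logS, derivative_expS]
  have h2 : expS (⇑d) (d x) = PowerSeries.C (c : K) * expS (⇑d) x := by
    rw [hx, show ((c : ℤ) : K) = ((c : ℚ) : K) by push_cast; ring, expS_rat_mul]
  rw [h1, h2, comp_C_mul]
  calc (1 + PowerSeries.X) * (PowerSeries.C ((c:ℤ) : K) * comp (expS (⇑d) x) (logS K) *
        PowerSeries.derivativeFun (logS K))
      = PowerSeries.C ((c:ℤ) : K) * comp (expS (⇑d) x) (logS K) *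
        (PowerSeries.derivativeFun (logS K) * (1 + PowerSeries.X)) := by ring
    _ = _ := by rw [derivative_logS_mul, mul_one, Phi]

theorem Phi_eigen (c : ℤ) (x : K) (hx : d x = (c : K) * x) :
    Phi d x * (1 + PowerSeries.X) ^ (-c).toNat
      = PowerSeries.C x * (1 + PowerSeries.X) ^ c.toNat := by
  set m : ℕ := (-c).toNat
  set p : ℕ := c.toNat
  have hcast : (c : K) + (m : K) = (p : K) := by
    have : c + (m : ℤ) = (p : ℤ) := by simp [m, p]; omega
    exact_mod_cast congrArg (Int.cast : ℤ → K) this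
  apply ODE_unique ((p : ℕ) : K)
  · -- (1+X) * (Phi x * (1+X)^m)' = C p * (Phi x * (1+X)^m)
    rw [PowerSeries.derivativeFun_mul, smul_eq_mul, smul_eq_mul]
    have h1 := Phi_ODE d c x hx
    have h2 := deriv_opX_pow (K := K) m
    rw [← hcast, map_add]
    ring_nf
    ring_nf at h1 h2
    linear_combination ((1 + PowerSeries.X) ^ m) * h1 + (Phi d x) * h2
  · rw [PowerSeries.derivativeFun_mul, smul_eq_mul, smul_eq_mul, (show PowerSeries.derivativeFun (PowerSeries.C x) = 0 from PowerSeries.derivative_C),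
      mul_zero, add_zero]
    have h2 := deriv_opX_pow (K := K) p
    linear_combination PowerSeries.C x * h2
  · rw [PowerSeries.coeff_zero_eq_constantCoeff_apply, PowerSeries.coeff_zero_eq_constantCoeff_apply,
      map_mul, map_mul, map_pow, map_pow, map_add, PowerSeries.constantCoeff_X,
      constantCoeff_Phi, PowerSeries.constantCoeff_C]
    norm_num

theorem constantCoeff_aeval (Q : Polynomial K) :
    PowerSeries.constantCoeff (Polynomial.aeval (1 + PowerSeries.X : PowerSeries K) Q)
      = Polynomial.eval 1 Q := by
  induction Q using Polynomial.induction_on' with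
  | add p q hp hq => rw [map_add, map_add, hp, hq, Polynomial.eval_add]
  | monomial n a =>
    rw [Polynomial.aeval_monomial, map_mul, map_pow, map_add, PowerSeries.constantCoeff_X]
    simp [Polynomial.eval_monomial, ← PowerSeries.C_eq_algebraMap, PowerSeries.constantCoeff_C]

end Aux

/-- If `∂` is rational semisimple (i.e. `K` is generated as a field by eigenvectors of
`∂` with integer eigenvalues), then for every `f ∈ K` the power series
`(σ ∘ exp(z∂))(f) ∈ K[[t-1]]` is the expansion at `t = 1` of a rational function in
`K(t)` regular at `t = 1`. -/
theorem stmt_4 {K : Type*} [Field K] [CharZero K] (d : Derivation ℚ K K)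
    {ι : Type*} (a : ι → K) (lam : ι → ℤ)
    (hgen : Subfield.closure (Set.range a) = ⊤)
    (heig : ∀ i, d (a i) = (lam i : K) * a i) (f : K) :
    ∃ P Q : Polynomial K, Polynomial.eval 1 Q ≠ 0 ∧
      comp (expS (⇑d) f) (logS K) * Polynomial.aeval (1 + PowerSeries.X : PowerSeries K) Q =
        Polynomial.aeval (1 + PowerSeries.X : PowerSeries K) P := by
  set v : PowerSeries K := 1 + PowerSeries.X with hv
  have zero_mem : ∃ P Q : Polynomial K, Polynomial.eval 1 Q ≠ 0 ∧
      Phi d 0 * Polynomial.aeval v Q = Polynomial.aeval v P :=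
    ⟨0, 1, by simp, by rw [Phi_zero, map_one, map_zero, zero_mul]⟩
  let S : Subfield K :=
  { carrier := {x : K | ∃ P Q : Polynomial K, Polynomial.eval 1 Q ≠ 0 ∧
      Phi d x * Polynomial.aeval v Q = Polynomial.aeval v P}
    zero_mem' := zero_mem
    one_mem' := ⟨1, 1, by simp, by rw [Phi_one, map_one, mul_one]⟩
    mul_mem' := by
      rintro x y ⟨P₁, Q₁, h1, e1⟩ ⟨P₂, Q₂, h2, e2⟩
      refine ⟨P₁ * P₂, Q₁ * Q₂, by simp [h1, h2], ?_⟩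
      rw [map_mul, map_mul]
      calc Phi d (x * y) * (Polynomial.aeval v Q₁ * Polynomial.aeval v Q₂)
          = (Phi d x * Polynomial.aeval v Q₁) * (Phi d y * Polynomial.aeval v Q₂) := by
            rw [Phi_mul]; ring
        _ = _ := by rw [e1, e2]
    add_mem' := by
      rintro x y ⟨P₁, Q₁, h1, e1⟩ ⟨P₂, Q₂, h2, e2⟩
      refine ⟨P₁ * Q₂ + P₂ * Q₁, Q₁ * Q₂, by simp [h1, h2], ?_⟩
      rw [map_mul, map_add, map_mul, map_mul]
      calc Phi d (x + y) * (Polynomial.aeval v Q₁ * Polynomial.aeval v Q₂)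
          = (Phi d x * Polynomial.aeval v Q₁) * Polynomial.aeval v Q₂
            + (Phi d y * Polynomial.aeval v Q₂) * Polynomial.aeval v Q₁ := by
            rw [Phi_add]; ring
        _ = _ := by rw [e1, e2]
    neg_mem' := by
      rintro x ⟨P, Q, h, e⟩
      exact ⟨-P, Q, h, by rw [Phi_neg, map_neg]; linear_combination -e⟩
    inv_mem' := by
      rintro x ⟨P, Q, hQ, e⟩
      by_cases hx0 : x = 0
      · rw [hx0, inv_zero]; exact zero_mem
      · have hco := congrArg (PowerSeries.constantCoeff (R := K)) e
        rw [map_mul, constantCoeff_Phi, hv, constantCoeff_aeval, constantCoeff_aeval] at hco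
        have hP : Polynomial.eval 1 P ≠ 0 := by
          rw [← hco]; exact mul_ne_zero hx0 hQ
        refine ⟨Q, P, hP, ?_⟩
        have h1 : Phi d x⁻¹ * Phi d x = 1 := by
          rw [← Phi_mul, inv_mul_cancel₀ hx0, Phi_one]
        calc Phi d x⁻¹ * Polynomial.aeval v P
            = Phi d x⁻¹ * (Phi d x * Polynomial.aeval v Q) := by rw [e]
          _ = (Phi d x⁻¹ * Phi d x) * Polynomial.aeval v Q := by ring
          _ = _ := by rw [h1, one_mul] }
  have hsub : Subfield.closure (Set.range a) ≤ S := by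
    rw [Subfield.closure_le]
    rintro _ ⟨i, rfl⟩
    refine ⟨Polynomial.C (a i) * Polynomial.X ^ (lam i).toNat,
      Polynomial.X ^ (-(lam i)).toNat, by simp, ?_⟩
    have h := Phi_eigen d (lam i) (a i) (heig i)
    rw [map_pow, map_mul, map_pow, Polynomial.aeval_X, Polynomial.aeval_C,
      ← PowerSeries.C_eq_algebraMap]
    exact h
  rw [hgen] at hsub
  exact hsub (Subfield.mem_top f)
end

section
/- Let K be a field of characteristic zero, ∂ : K → K a derivation, and s ∈ K. Then ∂(s) = s if and only if (σ ∘ exp(z∂))(s) = t·s in K[[t−1]], where t = 1 + (t−1). In particular, if ∂(s) = s then exp(z∂)(s) = s·exp(z) = s·∑_{i≥0} z^i/i!. -/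
open PowerSeries Finset

section Aux

variable {K : Type*} [Field K] [CharZero K]

lemma logS_const : constantCoeff (R := K) (logS K) = 0 := by
  rw [← coeff_zero_eq_constantCoeff_apply]
  simp [logS]

lemma coeff_logS_pow_eq_zero {n i : ℕ} (h : n < i) :
    coeff (R := K) n (logS K ^ i) = 0 := by
  have hx : (X : PowerSeries K) ∣ logS K := X_dvd_iff.mpr logS_const
  have hx2 : (X : PowerSeries K) ^ i ∣ logS K ^ i := pow_dvd_pow_of_dvd hx i
  exact (X_pow_dvd_iff.mp hx2) n h

lemma deriv_logS : d⁄dX K (logS K) = PowerSeries.mk fun n => (-1 : K) ^ n := by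
  ext n
  rw [coeff_derivative]
  have hn : ((n : K) + 1) ≠ 0 := Nat.cast_add_one_ne_zero n
  simp only [logS, coeff_mk, Nat.succ_ne_zero, if_false]
  push_cast
  rw [mul_assoc, inv_mul_cancel₀ hn, mul_one, pow_succ, pow_succ]
  ring

lemma one_add_X_mul_deriv_logS : (1 + X) * d⁄dX K (logS K) = 1 := by
  rw [deriv_logS]
  ext n
  rw [add_mul, one_mul, map_add]
  cases n with
  | zero => simp
  | succ m => simp [coeff_succ_X_mul, pow_succ]

lemma rec1 (m i : ℕ) :
    ((m : K) + 2) * coeff (R := K) (m + 2) (logS K ^ i)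
      + ((m : K) + 1) * coeff (R := K) (m + 1) (logS K ^ i)
      = (i : K) * coeff (R := K) (m + 1) (logS K ^ (i - 1)) := by
  have key : (1 + X) * d⁄dX K (logS K ^ i) = i • logS K ^ (i - 1) := by
    rw [Derivation.leibniz_pow, smul_eq_mul, mul_smul_comm,
      show (1 + X) * (logS K ^ (i-1) * d⁄dX K (logS K))
        = logS K ^ (i-1) * ((1 + X) * d⁄dX K (logS K)) by ring,
      one_add_X_mul_deriv_logS, mul_one]
  have h := congrArg (coeff (R := K) (m + 1)) key
  rw [add_mul, one_mul, map_add, coeff_succ_X_mul, coeff_derivative, coeff_derivative,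
    map_nsmul, nsmul_eq_mul] at h
  push_cast at h
  linear_combination h

/-- `A n = ∑_{i≤n} (i!)⁻¹ · coeff_n (log^i)`. -/
noncomputable def Aseq (K : Type*) [Field K] (n : ℕ) : K :=
  ∑ i ∈ Finset.range (n + 1), ((i.factorial : K))⁻¹ * coeff (R := K) n (logS K ^ i)

lemma A_rec (m : ℕ) :
    ((m : K) + 2) * Aseq K (m + 2) + ((m : K) + 1) * Aseq K (m + 1) = Aseq K (m + 1) := by
  have hext : ((m : K) + 1) * Aseq K (m + 1)
      = ∑ i ∈ Finset.range (m + 3), ((i.factorial : K))⁻¹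
          * (((m : K) + 1) * coeff (R := K) (m + 1) (logS K ^ i)) := by
    rw [Finset.sum_range_succ, coeff_logS_pow_eq_zero (by omega), Aseq, Finset.mul_sum]
    simp [mul_left_comm]
  have h1 : ((m : K) + 2) * Aseq K (m + 2)
      = ∑ i ∈ Finset.range (m + 3), ((i.factorial : K))⁻¹
          * (((m : K) + 2) * coeff (R := K) (m + 2) (logS K ^ i)) := by
    rw [Aseq, Finset.mul_sum]; congr 1; ext i; ring
  rw [h1, hext, ← Finset.sum_add_distrib]
  have hsum : ∀ i ∈ Finset.range (m + 3),
      ((i.factorial : K))⁻¹ * (((m : K) + 2) * coeff (R := K) (m + 2) (logS K ^ i))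
        + ((i.factorial : K))⁻¹ * (((m : K) + 1) * coeff (R := K) (m + 1) (logS K ^ i))
      = ((i.factorial : K))⁻¹ * ((i : K) * coeff (R := K) (m + 1) (logS K ^ (i - 1))) := by
    intro i _
    rw [← mul_add, rec1]
  rw [Finset.sum_congr rfl hsum, Finset.sum_range_succ']
  simp only [Nat.cast_zero, zero_mul, mul_zero, add_zero]
  rw [Aseq]
  apply Finset.sum_congr rfl
  intro i _
  have hi : ((i : K) + 1) ≠ 0 := Nat.cast_add_one_ne_zero i
  have hfac : ((i.factorial : K)) ≠ 0 := Nat.cast_ne_zero.mpr i.factorial_ne_zero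
  rw [Nat.add_sub_cancel, Nat.factorial_succ]
  push_cast
  rw [mul_inv, ← mul_assoc, mul_comm (((i:K)+1)⁻¹) ((i.factorial:K))⁻¹, mul_assoc,
    mul_assoc, ← mul_assoc (((i:K)+1)⁻¹), inv_mul_cancel₀ hi, one_mul]

lemma A_zero : Aseq K 0 = 1 := by
  simp [Aseq]

lemma A_one : Aseq K 1 = 1 := by
  rw [Aseq]
  rw [Finset.sum_range_succ, Finset.sum_range_one]
  simp [logS]

lemma A_ge_two (n : ℕ) : Aseq K (n + 2) = 0 := by
  induction n with
  | zero =>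
      have h := A_rec (K := K) 0
      rw [A_one] at h
      have h2 : ((2 : K)) ≠ 0 := two_ne_zero
      have h3 : (2 : K) * Aseq K 2 = 0 := by push_cast at h; linear_combination h
      exact (mul_eq_zero.mp h3).resolve_left h2
  | succ k ih =>
      have h := A_rec (K := K) (k + 1)
      rw [show k + 1 + 1 = k + 2 from rfl, ih, mul_zero, add_zero] at h
      have h2 : ((k + 1 : ℕ) : K) + 2 ≠ 0 := by
        have h3 : (((k + 3 : ℕ)) : K) ≠ 0 := Nat.cast_ne_zero.mpr (by omega)
        intro hc; apply h3; push_cast at hc ⊢; linear_combination hc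
      rcases mul_eq_zero.mp h with h' | h'
      · exact absurd h' h2
      · exact h'

end Aux

/-- `∂(s) = s` if and only if `(σ ∘ exp(z∂))(s) = t·s` in `K[[t-1]]` (with
`t = 1 + (t-1)`); and if `∂(s) = s` then `exp(z∂)(s) = s·exp(z) = s·∑ zⁱ/i!`. -/
theorem stmt_11 {K : Type*} [Field K] [CharZero K] (d : Derivation ℚ K K) (s : K) :
    (d s = s ↔ comp (expS (⇑d) s) (logS K) =
      (1 + PowerSeries.X) * PowerSeries.C (R := K) s) ∧
    (d s = s → expS (⇑d) s =
      PowerSeries.C (R := K) s * PowerSeries.mk fun i => (i.factorial : K)⁻¹) := by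
  constructor
  · constructor
    · intro hds
      have hit : ∀ i : ℕ, (⇑d)^[i] s = s := fun i => Function.iterate_fixed hds i
      ext n
      simp only [comp, coeff_mk]
      have hL : ∀ i ∈ Finset.range (n + 1),
          coeff (R := K) i (expS (⇑d) s) * coeff (R := K) n (logS K ^ i)
            = s * ((i.factorial : K)⁻¹ * coeff (R := K) n (logS K ^ i)) := by
        intro i _
        simp only [expS, coeff_mk, hit]; ring
      rw [Finset.sum_congr rfl hL, ← Finset.mul_sum,
        show (∑ i ∈ Finset.range (n + 1), (i.factorial : K)⁻¹ * coeff (R := K) n (logS K ^ i))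
          = Aseq K n from rfl, add_mul, one_mul, map_add]
      match n with
      | 0 => rw [A_zero]; simp
      | 1 => rw [A_one]; simp [coeff_succ_X_mul]
      | (n + 2) => rw [A_ge_two]; simp [coeff_succ_X_mul, coeff_C, coeff_X]
    · intro h
      have h1 := congrArg (coeff (R := K) 1) h
      simp only [comp, coeff_mk] at h1
      rw [Finset.sum_range_succ, Finset.sum_range_one, pow_zero, pow_one] at h1
      simp only [expS, logS, coeff_mk, add_mul, one_mul, map_add, coeff_succ_X_mul] at h1
      simpa [coeff_one, coeff_C, Function.iterate_one] using h1
  · intro hds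
    ext n
    simp [expS, PowerSeries.coeff_C_mul, Function.iterate_fixed hds, mul_comm]
end

section
/- Let K₀ ⊆ K be fields, φ* : K → K(t) a ring homomorphism with φ*|_{K₀} the inclusion K₀ ↪ K ⊆ K(t), and s ∈ K with φ*(s) = t·s and s ≠ 0. Then s is transcendental over K₀. -/
/-- If `φ* : K → K(t)` restricts to the inclusion on a subfield `K₀` and `s ≠ 0`
satisfies `φ*(s) = t·s`, then `s` is transcendental over `K₀`. -/
theorem stmt_14 {K : Type*} [Field K] (K₀ : Subfield K) (φ : K →+* RatFunc K)
    (hfix : ∀ x ∈ K₀, φ x = algebraMap K (RatFunc K) x)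
    (s : K) (hs0 : s ≠ 0) (hs : φ s = RatFunc.X * algebraMap K (RatFunc K) s) :
    Transcendental K₀ s := by
  set c := algebraMap K (RatFunc K) s with hc
  have hcne : c ≠ 0 := by
    simpa [hc] using hs0
  -- X is transcendental over K
  have hX : Transcendental K (RatFunc.X : RatFunc K) := by
    rw [transcendental_iff]
    intro p hp
    rw [← RatFunc.algebraMap_X, Polynomial.aeval_algebraMap_apply,
      Polynomial.aeval_X_left_apply] at hp
    exact (map_eq_zero_iff _ (RatFunc.algebraMap_injective K)).mp hp
  -- X * c is transcendental over K
  have hXc : Transcendental K (RatFunc.X * c) := by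
    rintro ⟨p, hp0, hpe⟩
    refine hX ⟨p.comp (Polynomial.C s * Polynomial.X), ?_, ?_⟩
    · have hq : (Polynomial.C s * Polynomial.X : Polynomial K).natDegree = 1 :=
        Polynomial.natDegree_C_mul_X _ hs0
      have hlc : (p.comp (Polynomial.C s * Polynomial.X)).leadingCoeff ≠ 0 := by
        rw [Polynomial.leadingCoeff_comp (by rw [hq]; norm_num)]
        exact mul_ne_zero (Polynomial.leadingCoeff_ne_zero.mpr hp0)
          (pow_ne_zero _ (by simpa [Polynomial.leadingCoeff_C_mul_X] using hs0))
      exact Polynomial.leadingCoeff_ne_zero.mp hlc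
    · rw [Polynomial.aeval_comp]
      have : Polynomial.aeval (RatFunc.X : RatFunc K) (Polynomial.C s * Polynomial.X) = RatFunc.X * c := by
        rw [map_mul, Polynomial.aeval_C, Polynomial.aeval_X, mul_comm, hc]
      rw [this]
      exact hpe
  intro halg
  obtain ⟨p, hp0, hpe⟩ := halg
  -- apply φ to the algebraic relation
  have key : Polynomial.eval₂ (φ.comp (algebraMap K₀ K)) (φ s) p = 0 := by
    rw [← Polynomial.hom_eval₂]
    rw [Polynomial.aeval_def] at hpe
    rw [hpe, map_zero]
  have hcomp : φ.comp (algebraMap K₀ K)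
      = (algebraMap K (RatFunc K)).comp (algebraMap K₀ K) := by
    ext x
    exact hfix x.1 x.2
  rw [hcomp, hs, ← Polynomial.eval₂_map] at key
  have hq0 : p.map (algebraMap K₀ K) ≠ 0 := by
    refine fun h => hp0 ?_
    exact Polynomial.map_injective _ (algebraMap (K₀ : Subfield K) K).injective
      (by simpa using h)
  exact hXc ⟨p.map (algebraMap K₀ K), hq0, key⟩
end
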